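/- arXiv:2505.15611 — 3 statements merged into one kernel-verified Lean document; each statement's English description precedes it below -/
import Mathlib

section
/- For fixed y with k < y < h, the function λ ↦ (e^{-λy} - e^{-λk})/(e^{-λh} - e^{-λk}) is strictly increasing in λ for λ > 0. -/
/-!
Factoring `exp (-λ k)` out of numerator and denominator turns the quotient into
`(u ^ p - 1) / (u - 1)` with `u = exp (-λ (h - k)) ∈ (0, 1)` and `p = (y - k) / (h - k) ∈ (0, 1)`:
the slope of the secant of the strictly concave function `t ↦ t ^ p` between `u` and `1`. That
slope strictly decreases in `u`, and `u` strictly decreases in `λ`.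
-/

open Real Set

lemma strictAntiOn_rpow_secant_one {p : ℝ} (hp₀ : 0 < p) (hp₁ : p < 1) :
    StrictAntiOn (fun u : ℝ => (u ^ p - 1) / (u - 1)) (Ici 0 \ {1}) := by
  intro u hu v hv huv
  simpa using (strictConcaveOn_rpow hp₀ hp₁).secant_strict_mono (a := 1) (by simp) hu.1 hv.1
    hu.2 hv.2 huv

lemma strictAntiOn_exp_neg_mul {c : ℝ} (hc : 0 < c) :
    StrictAntiOn (fun lam : ℝ => exp (-lam * c)) (Ioi 0) := fun _ _ _ _ hlt =>
  exp_lt_exp.2 (by nlinarith)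

lemma mapsTo_exp_neg_mul {c : ℝ} (hc : 0 < c) :
    MapsTo (fun lam : ℝ => exp (-lam * c)) (Ioi 0) (Ici 0 \ {1}) := fun lam hlam =>
  ⟨(exp_pos _).le, (exp_lt_one_iff.2 (by nlinarith [mem_Ioi.1 hlam])).ne⟩

lemma exp_sub_exp_div_exp_sub_exp (lam : ℝ) {k y h : ℝ} (hkh : k ≠ h) :
    (exp (-lam * y) - exp (-lam * k)) / (exp (-lam * h) - exp (-lam * k)) =
      (exp (-lam * (h - k)) ^ ((y - k) / (h - k)) - 1) / (exp (-lam * (h - k)) - 1) := by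
  have hhk : h - k ≠ 0 := sub_ne_zero.2 hkh.symm
  have hfactor (c : ℝ) : exp (-lam * c) - exp (-lam * k) =
      exp (-lam * k) * (exp (-lam * (c - k)) - 1) := by
    rw [mul_sub, mul_one, ← exp_add]
    ring_nf
  rw [← exp_mul, mul_assoc, mul_div_cancel₀ _ hhk, hfactor, hfactor,
    mul_div_mul_left _ _ (exp_pos _).ne']

theorem stmt_3 (k y h : ℝ) (hky : k < y) (hyh : y < h) :
    StrictMonoOn (fun lam : ℝ =>
      (Real.exp (-lam * y) - Real.exp (-lam * k)) /
        (Real.exp (-lam * h) - Real.exp (-lam * k))) (Set.Ioi 0) := by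
  have hhk : 0 < h - k := by linarith
  have hp₀ : 0 < (y - k) / (h - k) := div_pos (by linarith) hhk
  have hp₁ : (y - k) / (h - k) < 1 := (div_lt_one hhk).2 (by linarith)
  have hmono := (strictAntiOn_rpow_secant_one hp₀ hp₁).comp (strictAntiOn_exp_neg_mul hhk)
    (mapsTo_exp_neg_mul hhk)
  intro lam₁ hlam₁ lam₂ hlam₂ hlt
  simpa only [Function.comp_apply, exp_sub_exp_div_exp_sub_exp _ (by linarith : k ≠ h)] using
    hmono hlam₁ hlam₂ hlt
end

section
/- For all t ∈ (0, T], the P1 optimal inventory is strictly below the P0 optimal inventory: Q₀ e^{-(2γ-b)t/(2l)} < Q₀ (2l + (2γ-b)(T-t))/(2l + (2γ-b)T). -/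
/-!
With `a = (2γ - b) / (2l) > 0`, the P1 ratio is `exp (-a t)` and the P0 ratio is
`(1 + a (T - t)) / (1 + a T)`. Since `exp (a t) > 1 + a t`, the first is strictly below
`1 / (1 + a t)`, and `1 / (1 + a t)` is at most the second because
`(1 + a t) (1 + a (T - t)) = 1 + a T + a² t (T - t)`.
-/

namespace Real

theorem exp_neg_lt_inv_one_add {x : ℝ} (hx : 0 < x) : exp (-x) < (1 + x)⁻¹ := by
  rw [exp_neg]
  exact inv_strictAnti₀ (by linarith) (by linarith [add_one_lt_exp hx.ne'])

end Real

theorem inv_one_add_mul_le_div {a t T : ℝ} (ha : 0 ≤ a) (ht : 0 ≤ t) (htT : t ≤ T) :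
    (1 + a * t)⁻¹ ≤ (1 + a * (T - t)) / (1 + a * T) := by
  have hat : 0 < 1 + a * t := by positivity
  rw [inv_eq_one_div, div_le_div_iff₀ hat (by nlinarith)]
  nlinarith [mul_nonneg (mul_nonneg (mul_nonneg ha ha) ht) (sub_nonneg.mpr htT)]

theorem stmt_9_general (l γ b T Q₀ : ℝ) (hl : 0 < l) (hgb : 0 < 2 * γ - b)
    (hQ : 0 < Q₀) :
    ∀ t : ℝ, 0 < t → t ≤ T →
      Q₀ * Real.exp (-(2 * γ - b) * t / (2 * l)) <
        Q₀ * (2 * l + (2 * γ - b) * (T - t)) / (2 * l + (2 * γ - b) * T) := by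
  intro t ht htT
  set a := (2 * γ - b) / (2 * l) with ha_def
  have ha : 0 < a := by positivity
  have hexp : -(2 * γ - b) * t / (2 * l) = -(a * t) := by ring
  have hratio : (2 * l + (2 * γ - b) * (T - t)) / (2 * l + (2 * γ - b) * T)
      = (1 + a * (T - t)) / (1 + a * T) := by
    rw [ha_def]; field_simp
  rw [hexp, mul_div_assoc, hratio]
  gcongr
  exact (Real.exp_neg_lt_inv_one_add (by positivity)).trans_le
    (inv_one_add_mul_le_div ha.le ht.le htT)

theorem stmt_9 (l γ b T Q₀ : ℝ) (hl : 0 < l) (hgb : 0 < 2 * γ - b)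
    (hT : 0 < T) (hQ : 0 < Q₀) :
    ∀ t : ℝ, 0 < t → t ≤ T →
      Q₀ * Real.exp (-(2 * γ - b) * t / (2 * l)) <
        Q₀ * (2 * l + (2 * γ - b) * (T - t)) / (2 * l + (2 * γ - b) * T) :=
  stmt_9_general l γ b T Q₀ hl hgb hQ
end

section
/- For the Almgren-Chriss solution with Γ = √(φ/l) and ζ = (γ - b/2 + √(lφ))/(γ - b/2 - √(lφ)), assuming γ - b/2 > √(lφ) > 0, one has ζ > 1, and the inventory Q*(t) = Q₀(ζ e^{Γ(T-t)} - e^{-Γ(T-t)})/(ζ e^{ΓT} - e^{-ΓT}) is strictly positive and strictly decreasing on [0,T]. -/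
/-!
Since `0 < √(lφ) < γ - b/2`, the ratio `ζ` exceeds `1`. For `ζ > 0` and `Γ > 0` the map
`s ↦ ζ e^{Γs} - e^{-Γs}` is strictly increasing and equals `ζ - 1 > 0` at `s = 0`, so it is
positive for `s ≥ 0`. The inventory is `Q₀` times this map at `s = T - t`, divided by its (positive)
value at `s = T`, hence positive and strictly decreasing in `t ∈ [0, T]`.
-/

open Real

lemma one_lt_add_div_sub {a s : ℝ} (hs : 0 < s) (hsa : s < a) : 1 < (a + s) / (a - s) := by
  rw [one_lt_div (by linarith)]
  linarith

lemma strictMono_mul_exp_sub_exp_neg {ζ Γ : ℝ} (hζ : 0 < ζ) (hΓ : 0 < Γ) :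
    StrictMono fun s => ζ * exp (Γ * s) - exp (-Γ * s) := by
  intro s₁ s₂ hs
  have hpos : exp (Γ * s₁) < exp (Γ * s₂) := exp_lt_exp.mpr (by nlinarith)
  have hneg : exp (-Γ * s₂) < exp (-Γ * s₁) := exp_lt_exp.mpr (by nlinarith)
  have := mul_lt_mul_of_pos_left hpos hζ
  dsimp only
  linarith

lemma mul_exp_sub_exp_neg_pos {ζ Γ s : ℝ} (hζ : 1 < ζ) (hΓ : 0 < Γ) (hs : 0 ≤ s) :
    0 < ζ * exp (Γ * s) - exp (-Γ * s) :=
  calc (0 : ℝ) < ζ * exp (Γ * 0) - exp (-Γ * 0) := by simpa using hζ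
    _ ≤ ζ * exp (Γ * s) - exp (-Γ * s) :=
      (strictMono_mul_exp_sub_exp_neg (one_pos.trans hζ) hΓ).monotone hs

theorem stmt_16_general (l φ T Q₀ γ b : ℝ) (hl : 0 < l) (hφ : 0 < φ)
    (hQ : 0 < Q₀) (hζ : Real.sqrt (l * φ) < γ - b / 2) :
    let Γ := Real.sqrt (φ / l)
    let ζ := (γ - b / 2 + Real.sqrt (l * φ)) / (γ - b / 2 - Real.sqrt (l * φ))
    let Q : ℝ → ℝ := fun t =>
      Q₀ * (ζ * Real.exp (Γ * (T - t)) - Real.exp (-Γ * (T - t))) /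
        (ζ * Real.exp (Γ * T) - Real.exp (-Γ * T))
    1 < ζ ∧ (∀ t ∈ Set.Icc (0 : ℝ) T, 0 < Q t)
      ∧ StrictAntiOn Q (Set.Icc 0 T) := by
  intro Γ ζ Q
  have hΓ : 0 < Γ := sqrt_pos.mpr (by positivity)
  have hζ1 : 1 < ζ := one_lt_add_div_sub (sqrt_pos.mpr (by positivity)) hζ
  have hD {t : ℝ} (ht : t ∈ Set.Icc 0 T) : 0 < ζ * exp (Γ * T) - exp (-Γ * T) :=
    mul_exp_sub_exp_neg_pos hζ1 hΓ (ht.1.trans ht.2)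
  refine ⟨hζ1, fun t ht => ?_, fun t₁ ht₁ t₂ _ ht => ?_⟩
  · exact div_pos (mul_pos hQ (mul_exp_sub_exp_neg_pos hζ1 hΓ (sub_nonneg.mpr ht.2))) (hD ht)
  · have hN := strictMono_mul_exp_sub_exp_neg (one_pos.trans hζ1) hΓ (sub_lt_sub_left ht T)
    exact div_lt_div_of_pos_right (mul_lt_mul_of_pos_left hN hQ) (hD ht₁)

theorem stmt_16 (l φ T Q₀ γ b : ℝ) (hl : 0 < l) (hφ : 0 < φ) (hT : 0 < T)
    (hQ : 0 < Q₀) (hζ : Real.sqrt (l * φ) < γ - b / 2) :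
    let Γ := Real.sqrt (φ / l)
    let ζ := (γ - b / 2 + Real.sqrt (l * φ)) / (γ - b / 2 - Real.sqrt (l * φ))
    let Q : ℝ → ℝ := fun t =>
      Q₀ * (ζ * Real.exp (Γ * (T - t)) - Real.exp (-Γ * (T - t))) /
        (ζ * Real.exp (Γ * T) - Real.exp (-Γ * T))
    1 < ζ ∧ (∀ t ∈ Set.Icc (0 : ℝ) T, 0 < Q t)
      ∧ StrictAntiOn Q (Set.Icc 0 T) :=
  stmt_16_general l φ T Q₀ γ b hl hφ hQ hζ
end
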